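/- arXiv:2103.14183 — 2 statements merged into one kernel-verified Lean document; each statement's English description precedes it below -/
import Mathlib

section
/- The twisted convolution of a rapidly decaying function with a Schwartz function is a Schwartz function: if F is Schwartz on R^{2n}, G is measurable with sup_α |α^a G(α)| < ∞ for every multi-index a, and Ω' is any real 2n×2n matrix, then the function (F ⊛ G)(α) = ∫ exp(i α·Ω'·β/2) F(α − β) G(β) dβ is a Schwartz function on R^{2n}. -/
open MeasureTheory Real Complex

noncomputable section

/-- Configuration space ℝⁿ. -/
abbrev Vn (n : ℕ) := Fin n → ℝ
/-- Phase space ℝ²ⁿ, as pairs (x, p). -/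
abbrev PS (n : ℕ) := Vn n × Vn n

/-- Symplectic form α ∧ β = α_x·β_p − α_p·β_x. -/
def symp {n : ℕ} (a b : PS n) : ℝ := ∑ j, (a.1 j * b.2 j - a.2 j * b.1 j)

/-- Weyl displacement operator (D_ξ φ)(y) = exp(i(y − ξ_x/2)·ξ_p) φ(y − ξ_x). -/
def disp {n : ℕ} (ξ : PS n) (φ : Vn n → ℂ) : Vn n → ℂ :=
  fun y => Complex.exp (Complex.I * ((∑ j, (y j - ξ.1 j / 2) * ξ.2 j : ℝ) : ℂ)) * φ (y - ξ.1)

/-- L² inner product ⟨f, g⟩ = ∫ conj(f) g (conjugate-linear in the first argument). -/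
def ip {n : ℕ} (f g : Vn n → ℂ) : ℂ := ∫ x, (starRingEnd ℂ) (f x) * g x

/-- Wigner transform of the rank-one operator |f⟩⟨g|. -/
def wig2 {n : ℕ} (f g : Vn n → ℂ) (α : PS n) : ℂ :=
  (((2 * Real.pi) ^ n)⁻¹ : ℝ) *
    ∫ y : Vn n, Complex.exp (Complex.I * ((∑ j, α.2 j * y j : ℝ) : ℂ))
      * f (α.1 - (2:ℝ)⁻¹ • y) * (starRingEnd ℂ) (g (α.1 + (2:ℝ)⁻¹ • y))

/-- Wigner function of a (pure-state) wavefunction f. -/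
def wig {n : ℕ} (f : Vn n → ℂ) : PS n → ℂ := wig2 f f

/-- Wigner transform of a kernel K on ℝⁿ × ℝⁿ. -/
def wigK {n : ℕ} (K : PS n → ℂ) (α : PS n) : ℂ :=
  (((2 * Real.pi) ^ n)⁻¹ : ℝ) *
    ∫ y : Vn n, Complex.exp (Complex.I * ((∑ j, α.2 j * y j : ℝ) : ℂ))
      * K (α.1 - (2:ℝ)⁻¹ • y, α.1 + (2:ℝ)⁻¹ • y)

/-- Monomial x^a for a multi-index a. -/
def mono {n : ℕ} (a : Fin n → ℕ) (x : Vn n) : ℝ := ∏ j, x j ^ a j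

/-- Monomial on phase space for a pair multi-index. -/
def monoP {n : ℕ} (a : (Fin n → ℕ) × (Fin n → ℕ)) (α : PS n) : ℝ := mono a.1 α.1 * mono a.2 α.2

/-- |a| for multi-index. -/
def deg {n : ℕ} (a : Fin n → ℕ) : ℕ := ∑ j, a j

def degP {n : ℕ} (a : (Fin n → ℕ) × (Fin n → ℕ)) : ℕ := deg a.1 + deg a.2

/-- Partial derivative in coordinate j. -/
def pd {n : ℕ} (j : Fin n) (f : Vn n → ℂ) : Vn n → ℂ := fun x => fderiv ℝ f x (Pi.single j 1)

/-- Multi-index partial derivative ∂^b on ℝⁿ. -/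
def mderiv {n : ℕ} (b : Fin n → ℕ) (f : Vn n → ℂ) : Vn n → ℂ :=
  (List.finRange n).foldl (fun g j => (pd j)^[b j] g) f

/-- Directional derivative on phase space. -/
def pdP {n : ℕ} (v : PS n) (f : PS n → ℂ) : PS n → ℂ := fun x => fderiv ℝ f x v

/-- Multi-index partial derivative ∂^b on phase space (pair multi-index). -/
def mderivP {n : ℕ} (b : (Fin n → ℕ) × (Fin n → ℕ)) (f : PS n → ℂ) : PS n → ℂ :=
  (List.finRange n).foldl (fun g j => (pdP ((0 : Vn n), Pi.single j 1))^[b.2 j] g)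
    ((List.finRange n).foldl (fun g j => (pdP (Pi.single j 1, (0 : Vn n)))^[b.1 j] g) f)

/-- A function is Schwartz class iff it agrees with some `SchwartzMap`. -/
def IsSchwartz {E : Type*} [NormedAddCommGroup E] [NormedSpace ℝ E] (f : E → ℂ) : Prop :=
  ∃ g : SchwartzMap E ℂ, ∀ x, g x = f x

end

/-!
Differentiating under the integral sign gives
`∂_v (F ⊛ G) = (∂_v F) ⊛ G + F ⊛ (β ↦ (i/2) B(v, β) G(β))` for the twisted convolution with respect
to the bilinear form `B(α, β) = α ⬝ Ω β`, and multiplying a rapidly decaying function by a linear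
function keeps it rapidly decaying. Hence the real span of the twisted convolutions `F ⊛ G`
(`F` Schwartz, `G` measurable and rapidly decaying) is closed under directional derivatives.
Each `F ⊛ G` decays rapidly because `‖α‖ ^ k ≤ 2 ^ (k - 1) (‖α - β‖ ^ k + ‖β‖ ^ k)` splits the
weight between `F` and `G`. Finally, a space of differentiable rapidly decaying functions that is
closed under directional derivatives consists of Schwartz functions: in a basis, the derivative of
each of its members is a fixed linear combination of directional derivatives, so all iterated
derivatives decay by induction.
-/

open MeasureTheory Complex ContinuousLinearMap LineDeriv
open scoped SchwartzMap

section RapidDecay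

variable {E V : Type*} [NormedAddCommGroup E] [NormedAddCommGroup V]

def RapidDecay (f : E → V) : Prop := ∀ k : ℕ, ∃ C, ∀ x, ‖x‖ ^ k * ‖f x‖ ≤ C

namespace RapidDecay

lemma zero : RapidDecay (0 : E → V) := fun _ => ⟨0, fun x => by simp⟩

lemma add {f g : E → V} (hf : RapidDecay f) (hg : RapidDecay g) : RapidDecay (f + g) := by
  intro k
  obtain ⟨C₁, h₁⟩ := hf k
  obtain ⟨C₂, h₂⟩ := hg k
  refine ⟨C₁ + C₂, fun x => ?_⟩
  calc ‖x‖ ^ k * ‖f x + g x‖ ≤ ‖x‖ ^ k * ‖f x‖ + ‖x‖ ^ k * ‖g x‖ := by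
        rw [← mul_add]; gcongr; exact norm_add_le _ _
    _ ≤ C₁ + C₂ := add_le_add (h₁ x) (h₂ x)

lemma const_smul {𝕜 : Type*} [NormedField 𝕜] [NormedSpace 𝕜 V] (c : 𝕜) {f : E → V}
    (hf : RapidDecay f) : RapidDecay (c • f) := by
  intro k
  obtain ⟨C, h⟩ := hf k
  refine ⟨‖c‖ * C, fun x => ?_⟩
  calc ‖x‖ ^ k * ‖(c • f) x‖ = ‖c‖ * (‖x‖ ^ k * ‖f x‖) := by
        rw [Pi.smul_apply, norm_smul]; ring
    _ ≤ ‖c‖ * C := by gcongr; exact h x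

lemma of_mem_span [NormedSpace ℝ V] {s : Set (E → V)} (hs : ∀ f ∈ s, RapidDecay f) {f : E → V}
    (hf : f ∈ Submodule.span ℝ s) : RapidDecay f := by
  induction hf using Submodule.span_induction with
  | mem f hf => exact hs f hf
  | zero => exact zero
  | add f g _ _ hf hg => exact hf.add hg
  | smul c f _ hf => exact hf.const_smul c

lemma clm_mul [NormedSpace ℝ E] {G : E → ℂ} (c : E →L[ℝ] ℂ) (hG : RapidDecay G) :
    RapidDecay fun x => c x * G x := by
  intro k
  obtain ⟨C, hC⟩ := hG (k + 1)
  refine ⟨‖c‖ * C, fun x => ?_⟩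
  calc ‖x‖ ^ k * ‖c x * G x‖ ≤ ‖x‖ ^ k * (‖c‖ * ‖x‖ * ‖G x‖) := by
        rw [norm_mul]; gcongr; exact c.le_opNorm x
    _ = ‖c‖ * (‖x‖ ^ (k + 1) * ‖G x‖) := by ring
    _ ≤ ‖c‖ * C := by gcongr; exact hC x

variable [MeasurableSpace E] [BorelSpace E] [SecondCountableTopology E] (μ : Measure E)
  [μ.HasTemperateGrowth]

lemma integrable_norm_pow_mul {G : E → V} (hGm : AEStronglyMeasurable G μ) (hG : RapidDecay G)
    (k : ℕ) : Integrable (fun x => ‖x‖ ^ k * ‖G x‖) μ := by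
  obtain ⟨C₁, h₁⟩ := hG 0
  obtain ⟨C₂, h₂⟩ := hG (k + μ.integrablePower)
  exact integrable_of_le_of_pow_mul_le (fun x => by simpa using h₁ x) h₂ hGm

lemma integrable {G : E → V} (hGm : AEStronglyMeasurable G μ) (hG : RapidDecay G) :
    Integrable G μ :=
  (integrable_norm_iff hGm).mp (by simpa using hG.integrable_norm_pow_mul μ hGm 0)

lemma integrable_norm_mul_add_mul_norm {G : E → V} (hGm : AEStronglyMeasurable G μ)
    (hG : RapidDecay G) (a b : ℝ) : Integrable (fun x => ‖G x‖ * (a + b * ‖x‖)) μ := by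
  refine (((hG.integrable_norm_pow_mul μ hGm 0).const_mul a).add
    ((hG.integrable_norm_pow_mul μ hGm 1).const_mul b)).congr (ae_of_all _ fun x => ?_)
  simp only [Pi.add_apply, pow_zero, pow_one]
  ring

end RapidDecay

lemma mono_single {m : ℕ} (j : Fin m) (k : ℕ) (x : Fin m → ℝ) :
    mono (Pi.single j k) x = x j ^ k := by
  simp [mono, Pi.single_apply, pow_ite]

lemma rapidDecay_of_forall_abs_mono_mul_le {m : ℕ} {G : (Fin m → ℝ) → ℂ}
    (hG : ∀ a : Fin m → ℕ, ∃ C, ∀ x, |mono a x| * ‖G x‖ ≤ C) : RapidDecay G := by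
  intro k
  rcases isEmpty_or_nonempty (Fin m) with hm | hm
  · exact ⟨‖(0 : Fin m → ℝ)‖ ^ k * ‖G 0‖, fun x => by rw [Subsingleton.elim x 0]⟩
  choose C hC using fun j => hG (Pi.single j k)
  refine ⟨∑ j, |C j|, fun x => ?_⟩
  obtain ⟨j, -, hj⟩ := Finset.exists_max_image Finset.univ (fun i => |x i|) Finset.univ_nonempty
  have hx : ‖x‖ ≤ |x j| := (pi_norm_le_iff_of_nonneg (abs_nonneg _)).mpr fun i => by
    simpa using hj i (Finset.mem_univ i)
  calc ‖x‖ ^ k * ‖G x‖ ≤ |mono (Pi.single j k) x| * ‖G x‖ := by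
        rw [mono_single, abs_pow]; gcongr
    _ ≤ |C j| := (hC j x).trans (le_abs_self _)
    _ ≤ ∑ j, |C j| := Finset.single_le_sum (fun i _ => abs_nonneg (C i)) (Finset.mem_univ j)

end RapidDecay

section SchwartzCriterion

variable {E V : Type*} [NormedAddCommGroup E] [NormedSpace ℝ E]
  [NormedAddCommGroup V] [NormedSpace ℝ V]

lemma ContinuousLinearMap.exists_eq_sum_apply_basis {ι : Type*} [Fintype ι]
    (b : Module.Basis ι ℝ E) :
    ∃ B : ι → V →L[ℝ] E →L[ℝ] V, ∀ L : E →L[ℝ] V, L = ∑ i, B i (L (b i)) := by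
  refine ⟨fun i => smulRightL ℝ E V ((proj i).comp b.equivFunL.toContinuousLinearMap),
    fun L => ?_⟩
  ext v
  calc L v = L (∑ i, b.repr v i • b i) := by rw [b.sum_repr]
    _ = _ := by simp only [map_sum, map_smul]; simp

lemma differentiable_and_fderiv_apply_mem_span {s : Set (E → V)}
    (hdiff : ∀ f ∈ s, Differentiable ℝ f)
    (hderiv : ∀ f ∈ s, ∀ v, (fun x => fderiv ℝ f x v) ∈ Submodule.span ℝ s)
    {f : E → V} (hf : f ∈ Submodule.span ℝ s) :
    Differentiable ℝ f ∧ ∀ v, (fun x => fderiv ℝ f x v) ∈ Submodule.span ℝ s := by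
  induction hf using Submodule.span_induction with
  | mem f hf => exact ⟨hdiff f hf, hderiv f hf⟩
  | zero => exact ⟨differentiable_const 0, fun v => by convert (Submodule.span ℝ s).zero_mem; simp⟩
  | add f g _ _ hf hg =>
    refine ⟨hf.1.add hg.1, fun v => ?_⟩
    have : (fun x => fderiv ℝ (f + g) x v) =
        (fun x => fderiv ℝ f x v) + fun x => fderiv ℝ g x v := by
      ext x; simp [fderiv_add (hf.1 x) (hg.1 x)]
    exact this ▸ Submodule.add_mem _ (hf.2 v) (hg.2 v)
  | smul c f _ hf =>
    refine ⟨hf.1.const_smul c, fun v => ?_⟩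
    have : (fun x => fderiv ℝ (c • f) x v) = c • fun x => fderiv ℝ f x v := by
      ext x; simp [fderiv_const_smul (hf.1 x)]
    exact this ▸ Submodule.smul_mem _ c (hf.2 v)

variable [FiniteDimensional ℝ E] {s : Set (E → V)}

lemma contDiff_of_fderiv_apply_mem (hdiff : ∀ f ∈ s, Differentiable ℝ f)
    (hderiv : ∀ f ∈ s, ∀ v, (fun x => fderiv ℝ f x v) ∈ s) (n : ℕ) :
    ∀ f ∈ s, ContDiff ℝ n f := by
  induction n with
  | zero => exact fun f hf => contDiff_zero.mpr (hdiff f hf).continuous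
  | succ n ih =>
    intro f hf
    exact contDiff_succ_iff_fderiv_apply.mpr
      ⟨hdiff f hf, by simp, fun v => ih _ (hderiv f hf v)⟩

lemma rapidDecay_iteratedFDeriv_of_fderiv_apply_mem (hdiff : ∀ f ∈ s, Differentiable ℝ f)
    (hderiv : ∀ f ∈ s, ∀ v, (fun x => fderiv ℝ f x v) ∈ s) (hdecay : ∀ f ∈ s, RapidDecay f)
    (n : ℕ) : ∀ f ∈ s, RapidDecay (iteratedFDeriv ℝ n f) := by
  induction n with
  | zero => exact fun f hf k => by simpa using hdecay f hf k
  | succ n ih =>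
    intro f hf k
    set b := Module.finBasis ℝ E
    obtain ⟨B, hB⟩ := ContinuousLinearMap.exists_eq_sum_apply_basis (V := V) b
    choose C hC using fun i => ih _ (hderiv f hf (b i)) k
    refine ⟨∑ i, ‖B i‖ * C i, fun x => ?_⟩
    have hsmooth i := contDiff_of_fderiv_apply_mem hdiff hderiv n _ (hderiv f hf (b i))
    have hfderiv : fderiv ℝ f = fun x => ∑ i, B i (fderiv ℝ f x (b i)) := funext fun x => hB _
    rw [← norm_iteratedFDeriv_fderiv, hfderiv,
      iteratedFDeriv_sum (f := fun i x => B i (fderiv ℝ f x (b i)))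
        (fun i _ => (B i).contDiff.comp (hsmooth i)), Finset.sum_apply]
    refine (mul_le_mul_of_nonneg_left (norm_sum_le _ _) (by positivity)).trans ?_
    rw [Finset.mul_sum]
    refine Finset.sum_le_sum fun i _ => ?_
    calc ‖x‖ ^ k * ‖iteratedFDeriv ℝ n (B i ∘ fun x => fderiv ℝ f x (b i)) x‖
        ≤ ‖x‖ ^ k * (‖B i‖ * ‖iteratedFDeriv ℝ n (fun x => fderiv ℝ f x (b i)) x‖) := by
          gcongr
          exact (B i).norm_iteratedFDeriv_comp_left (hsmooth i).contDiffAt le_rfl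
      _ ≤ ‖B i‖ * C i := by
          rw [mul_left_comm]; gcongr; exact hC i x

theorem exists_schwartzMap_of_fderiv_apply_mem (hdiff : ∀ f ∈ s, Differentiable ℝ f)
    (hderiv : ∀ f ∈ s, ∀ v, (fun x => fderiv ℝ f x v) ∈ s) (hdecay : ∀ f ∈ s, RapidDecay f)
    {f : E → V} (hf : f ∈ s) : ∃ g : 𝓢(E, V), ⇑g = f :=
  ⟨⟨f, contDiff_infty.mpr fun n => contDiff_of_fderiv_apply_mem hdiff hderiv n f hf,
    fun k n => rapidDecay_iteratedFDeriv_of_fderiv_apply_mem hdiff hderiv hdecay n f hf k⟩, rfl⟩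

theorem exists_schwartzMap_of_mem_span (hdiff : ∀ f ∈ s, Differentiable ℝ f)
    (hderiv : ∀ f ∈ s, ∀ v, (fun x => fderiv ℝ f x v) ∈ Submodule.span ℝ s)
    (hdecay : ∀ f ∈ s, RapidDecay f) {f : E → V} (hf : f ∈ Submodule.span ℝ s) :
    ∃ g : 𝓢(E, V), ⇑g = f :=
  exists_schwartzMap_of_fderiv_apply_mem (s := Submodule.span ℝ s)
    (fun _ hf => (differentiable_and_fderiv_apply_mem_span hdiff hderiv hf).1)
    (fun _ hf => (differentiable_and_fderiv_apply_mem_span hdiff hderiv hf).2)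
    (fun _ hf => RapidDecay.of_mem_span hdecay hf) hf

end SchwartzCriterion

lemma SchwartzMap.pow_mul_norm_apply_sub_le {E V : Type*} [NormedAddCommGroup E]
    [NormedSpace ℝ E] [NormedAddCommGroup V] [NormedSpace ℝ V] (F : 𝓢(E, V)) (k : ℕ) (α β : E) :
    ‖α‖ ^ k * ‖F (α - β)‖ ≤
      2 ^ (k - 1) * (SchwartzMap.seminorm ℝ k 0 F + SchwartzMap.seminorm ℝ 0 0 F * ‖β‖ ^ k) := by
  have hα : ‖α‖ ^ k ≤ 2 ^ (k - 1) * (‖α - β‖ ^ k + ‖β‖ ^ k) :=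
    (pow_le_pow_left₀ (norm_nonneg _) (norm_le_norm_sub_add α β) k).trans
      (add_pow_le (norm_nonneg _) (norm_nonneg _) k)
  calc ‖α‖ ^ k * ‖F (α - β)‖ ≤ 2 ^ (k - 1) * (‖α - β‖ ^ k + ‖β‖ ^ k) * ‖F (α - β)‖ := by gcongr
    _ = 2 ^ (k - 1) * (‖α - β‖ ^ k * ‖F (α - β)‖ + ‖F (α - β)‖ * ‖β‖ ^ k) := by ring
    _ ≤ _ := by
      gcongr
      · exact F.norm_pow_mul_le_seminorm ℝ k _
      · exact F.norm_le_seminorm ℝ _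

section TwistedConvolution

variable {E : Type*} [NormedAddCommGroup E] [NormedSpace ℝ E] (B : E →L[ℝ] E →L[ℝ] ℝ)

noncomputable def twistPhase (α β : E) : ℂ := cexp (I * ((B α β / 2 : ℝ) : ℂ))

lemma norm_twistPhase (α β : E) : ‖twistPhase B α β‖ = 1 := by
  rw [twistPhase, Complex.norm_exp]; simp

lemma continuous_twistPhase (α : E) : Continuous (twistPhase B α) := by
  unfold twistPhase; fun_prop

lemma hasFDerivAt_twistPhase (α β : E) :
    HasFDerivAt (fun α => twistPhase B α β)
      (twistPhase B α β • (I / 2) • (ofRealCLM ∘L B.flip β)) α := by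
  have hexponent : (fun α => I * ((B α β / 2 : ℝ) : ℂ)) =
      fun α => I / 2 * (ofRealCLM ∘L B.flip β) α := by
    ext1 α
    simp only [ofReal_div, ofReal_ofNat, comp_apply, flip_apply, ofRealCLM_apply]
    ring
  have h := ((ofRealCLM ∘L B.flip β).hasFDerivAt (x := α)).const_mul (I / 2)
  rw [← hexponent] at h
  exact h.cexp

lemma norm_twistPhase_fderiv_le (β : E) : ‖(I / 2) • (ofRealCLM ∘L B.flip β)‖ ≤ ‖B‖ * ‖β‖ := by
  refine opNorm_le_bound _ (by positivity) fun v => ?_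
  have h := B.le_opNorm₂ v β
  rw [Real.norm_eq_abs] at h
  have : 0 ≤ ‖B‖ * ‖β‖ * ‖v‖ := by positivity
  calc ‖((I / 2) • (ofRealCLM ∘L B.flip β)) v‖ = |B v β| / 2 := by simp [div_eq_inv_mul]
    _ ≤ ‖B‖ * ‖β‖ * ‖v‖ := by linarith

lemma RapidDecay.bilin_mul {G : E → ℂ} (hG : RapidDecay G) (v : E) :
    RapidDecay fun β => I / 2 * B v β * G β := by
  simpa using hG.clm_mul ((I / 2) • (ofRealCLM ∘L B v))

noncomputable def twistedConvIntegrandFDeriv (F G : E → ℂ) (α β : E) : E →L[ℝ] ℂ :=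
  G β • (twistPhase B α β • fderiv ℝ F (α - β) +
    F (α - β) • twistPhase B α β • (I / 2) • (ofRealCLM ∘L B.flip β))

lemma hasFDerivAt_twistedConv_integrand (F : 𝓢(E, ℂ)) (G : E → ℂ) (α β : E) :
    HasFDerivAt (fun α => twistPhase B α β * F (α - β) * G β)
      (twistedConvIntegrandFDeriv B F G α β) α := by
  have hF : HasFDerivAt (fun α => F (α - β)) (fderiv ℝ F (α - β)) α := by
    simpa [Function.comp_def] using
      (F.hasFDerivAt (α - β)).comp α ((hasFDerivAt_id α).sub_const β)
  exact ((hasFDerivAt_twistPhase B α β).mul hF).mul_const (G β)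

lemma norm_twistedConvIntegrandFDeriv_le (F : 𝓢(E, ℂ)) (G : E → ℂ) (α β : E) :
    ‖twistedConvIntegrandFDeriv B F G α β‖ ≤
      ‖G β‖ * (SchwartzMap.seminorm ℝ 0 0 (SchwartzMap.fderivCLM ℝ E ℂ F) +
        SchwartzMap.seminorm ℝ 0 0 F * ‖B‖ * ‖β‖) := by
  rw [twistedConvIntegrandFDeriv, norm_smul]
  gcongr
  refine (norm_add_le _ _).trans (add_le_add ?_ ?_)
  · rw [norm_smul, norm_twistPhase, one_mul]
    exact (SchwartzMap.fderivCLM ℝ E ℂ F).norm_le_seminorm ℝ (α - β)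
  · rw [norm_smul, norm_smul, norm_twistPhase, one_mul, mul_assoc]
    exact mul_le_mul (F.norm_le_seminorm ℝ _) (norm_twistPhase_fderiv_le B β) (by positivity)
      (by positivity)

lemma twistedConvIntegrandFDeriv_apply (F : 𝓢(E, ℂ)) (G : E → ℂ) (α β v : E) :
    twistedConvIntegrandFDeriv B F G α β v =
      twistPhase B α β * (∂_{v} F) (α - β) * G β +
        twistPhase B α β * F (α - β) * (I / 2 * B v β * G β) := by
  simp only [twistedConvIntegrandFDeriv, smul_add, add_apply, smul_apply, smul_eq_mul, comp_apply,
    flip_apply, ofRealCLM_apply, SchwartzMap.lineDerivOp_apply_eq_fderiv]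
  ring

variable [MeasurableSpace E] [BorelSpace E] (μ : Measure E)

noncomputable def twistedConv (F G : E → ℂ) (α : E) : ℂ := ∫ β, twistPhase B α β * F (α - β) * G β ∂μ

lemma integrable_twistedConv_integrand (F : 𝓢(E, ℂ)) {G : E → ℂ} (hG : Integrable G μ)
    (α : E) : Integrable (fun β => twistPhase B α β * F (α - β) * G β) μ :=
  hG.bdd_mul (c := SchwartzMap.seminorm ℝ 0 0 F)
    ((continuous_twistPhase B α).mul
      (F.continuous.comp (continuous_sub_left α))).aestronglyMeasurable
    (ae_of_all _ fun β => by rw [norm_mul, norm_twistPhase, one_mul]; exact F.norm_le_seminorm ℝ _)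

variable [SecondCountableTopology E]

lemma aestronglyMeasurable_twistedConvIntegrandFDeriv (F : 𝓢(E, ℂ)) {G : E → ℂ}
    (hGm : AEStronglyMeasurable G μ) (α : E) :
    AEStronglyMeasurable (twistedConvIntegrandFDeriv B F G α) μ :=
  hGm.smul <| Continuous.aestronglyMeasurable <|
    ((continuous_twistPhase B α).smul
      ((SchwartzMap.fderivCLM ℝ E ℂ F).continuous.comp (continuous_sub_left α))).add
    ((F.continuous.comp (continuous_sub_left α)).smul ((continuous_twistPhase B α).smul
      (((ofRealCLM.compL ℝ E ℝ ℂ).continuous.comp B.flip.continuous).const_smul (I / 2))))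

variable [μ.HasTemperateGrowth]

lemma rapidDecay_twistedConv (F : 𝓢(E, ℂ)) {G : E → ℂ} (hGm : AEStronglyMeasurable G μ)
    (hG : RapidDecay G) : RapidDecay (twistedConv B μ F G) := by
  intro k
  set Sk := SchwartzMap.seminorm ℝ k 0 F
  set S₀ := SchwartzMap.seminorm ℝ 0 0 F
  have hG₀ := hG.integrable_norm_pow_mul μ hGm 0
  have hGk := hG.integrable_norm_pow_mul μ hGm k
  simp only [pow_zero, one_mul] at hG₀
  refine ⟨2 ^ (k - 1) * (Sk * ∫ β, ‖G β‖ ∂μ + S₀ * ∫ β, ‖β‖ ^ k * ‖G β‖ ∂μ), fun α => ?_⟩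
  have hnorm : ‖twistedConv B μ F G α‖ ≤ ∫ β, ‖F (α - β)‖ * ‖G β‖ ∂μ :=
    (norm_integral_le_integral_norm _).trans_eq
      (integral_congr_ae (ae_of_all _ fun β => by simp [norm_twistPhase]))
  calc ‖α‖ ^ k * ‖twistedConv B μ F G α‖ ≤ ∫ β, ‖α‖ ^ k * ‖F (α - β)‖ * ‖G β‖ ∂μ := by
        simp_rw [mul_assoc]; rw [integral_const_mul]; gcongr
    _ ≤ ∫ β, 2 ^ (k - 1) * (Sk * ‖G β‖ + S₀ * (‖β‖ ^ k * ‖G β‖)) ∂μ := by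
        refine integral_mono_of_nonneg (ae_of_all _ fun β => by positivity)
          (((hG₀.const_mul Sk).add (hGk.const_mul S₀)).const_mul _) (ae_of_all _ fun β => ?_)
        calc ‖α‖ ^ k * ‖F (α - β)‖ * ‖G β‖
            ≤ 2 ^ (k - 1) * (Sk + S₀ * ‖β‖ ^ k) * ‖G β‖ :=
              mul_le_mul_of_nonneg_right (F.pow_mul_norm_apply_sub_le k α β) (norm_nonneg _)
          _ = _ := by ring
    _ = _ := by
        rw [integral_const_mul, integral_add (hG₀.const_mul Sk) (hGk.const_mul S₀),
          integral_const_mul, integral_const_mul]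

lemma hasFDerivAt_twistedConv (F : 𝓢(E, ℂ)) {G : E → ℂ} (hGm : AEStronglyMeasurable G μ)
    (hG : RapidDecay G) (α : E) :
    HasFDerivAt (twistedConv B μ F G) (∫ β, twistedConvIntegrandFDeriv B F G α β ∂μ) α :=
  hasFDerivAt_integral_of_dominated_of_fderiv_le (Metric.ball_mem_nhds α one_pos)
    (Filter.Eventually.of_forall fun α =>
      (integrable_twistedConv_integrand B μ F (hG.integrable μ hGm) α).aestronglyMeasurable)
    (integrable_twistedConv_integrand B μ F (hG.integrable μ hGm) α)
    (aestronglyMeasurable_twistedConvIntegrandFDeriv B μ F hGm α)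
    (ae_of_all _ fun β α _ => norm_twistedConvIntegrandFDeriv_le B F G α β)
    (hG.integrable_norm_mul_add_mul_norm μ hGm _ _)
    (ae_of_all _ fun β α _ => hasFDerivAt_twistedConv_integrand B F G α β)

lemma fderiv_twistedConv_apply (F : 𝓢(E, ℂ)) {G : E → ℂ} (hGm : AEStronglyMeasurable G μ)
    (hG : RapidDecay G) (α v : E) :
    fderiv ℝ (twistedConv B μ F G) α v =
      twistedConv B μ (∂_{v} F : 𝓢(E, ℂ)) G α + twistedConv B μ F (fun β => I / 2 * B v β * G β) α := by
  have hGv : AEStronglyMeasurable (fun β => I / 2 * B v β * G β) μ :=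
    (continuous_const.mul (continuous_ofReal.comp (B v).continuous)).aestronglyMeasurable.mul hGm
  have hK : Integrable (twistedConvIntegrandFDeriv B F G α) μ :=
    (hG.integrable_norm_mul_add_mul_norm μ hGm _ _).mono'
      (aestronglyMeasurable_twistedConvIntegrandFDeriv B μ F hGm α)
      (ae_of_all _ fun β => norm_twistedConvIntegrandFDeriv_le B F G α β)
  rw [(hasFDerivAt_twistedConv B μ F hGm hG α).fderiv, integral_apply hK]
  simp_rw [twistedConvIntegrandFDeriv_apply]
  exact integral_add (integrable_twistedConv_integrand B μ _ (hG.integrable μ hGm) α)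
    (integrable_twistedConv_integrand B μ F ((hG.bilin_mul B v).integrable μ hGv) α)

theorem exists_schwartzMap_eq_twistedConv [FiniteDimensional ℝ E] (F : 𝓢(E, ℂ)) {G : E → ℂ}
    (hGm : AEStronglyMeasurable G μ) (hG : RapidDecay G) :
    ∃ g : 𝓢(E, ℂ), ⇑g = twistedConv B μ F G := by
  refine exists_schwartzMap_of_mem_span
    (s := {f | ∃ (F : 𝓢(E, ℂ)) (G : E → ℂ), AEStronglyMeasurable G μ ∧ RapidDecay G ∧
      f = twistedConv B μ F G}) ?_ ?_ ?_ (Submodule.subset_span ⟨F, G, hGm, hG, rfl⟩)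
  · rintro _ ⟨F, G, hGm, hG, rfl⟩ α
    exact (hasFDerivAt_twistedConv B μ F hGm hG α).differentiableAt
  · rintro _ ⟨F, G, hGm, hG, rfl⟩ v
    have hGv : AEStronglyMeasurable (fun β => I / 2 * B v β * G β) μ :=
      (continuous_const.mul (continuous_ofReal.comp (B v).continuous)).aestronglyMeasurable.mul hGm
    rw [funext (fderiv_twistedConv_apply B μ F hGm hG · v)]
    exact Submodule.add_mem _ (Submodule.subset_span ⟨∂_{v} F, G, hGm, hG, rfl⟩)
      (Submodule.subset_span ⟨F, _, hGv, hG.bilin_mul B v, rfl⟩)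
  · rintro _ ⟨F, G, hGm, hG, rfl⟩
    exact rapidDecay_twistedConv B μ F hGm hG

end TwistedConvolution

noncomputable def Matrix.bilinCLM {m : ℕ} (Ω : Matrix (Fin m) (Fin m) ℝ) :
    (Fin m → ℝ) →L[ℝ] (Fin m → ℝ) →L[ℝ] ℝ :=
  LinearMap.toContinuousLinearMap
    (LinearMap.toContinuousLinearMap.toLinearMap ∘ₗ Matrix.toLinearMap₂' ℝ Ω)

lemma Matrix.bilinCLM_apply {m : ℕ} (Ω : Matrix (Fin m) (Fin m) ℝ) (α β : Fin m → ℝ) :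
    Ω.bilinCLM α β = dotProduct α (Ω.mulVec β) := by
  simp [Matrix.bilinCLM, Matrix.toLinearMap₂'_apply']

open MeasureTheory Real Complex in
/-- the twisted convolution of a Schwartz function F with a rapidly
decaying measurable function G is a Schwartz function. -/
theorem twisted_convolution_schwartz (n : ℕ) (Ω : Matrix (Fin (2 * n)) (Fin (2 * n)) ℝ)
    (F : SchwartzMap (Vn (2 * n)) ℂ) (G : Vn (2 * n) → ℂ)
    (hGm : Measurable G)
    (hG : ∀ a : Fin (2 * n) → ℕ, ∃ C, ∀ α, |mono a α| * ‖G α‖ ≤ C) :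
    IsSchwartz (fun α : Vn (2 * n) =>
      ∫ β : Vn (2 * n), Complex.exp (Complex.I * ((dotProduct α (Ω.mulVec β) / 2 : ℝ) : ℂ))
        * F (α - β) * G β) := by
  obtain ⟨g, hg⟩ := exists_schwartzMap_eq_twistedConv Ω.bilinCLM volume F hGm.aestronglyMeasurable
    (rapidDecay_of_forall_abs_mono_mul_le hG)
  exact ⟨g, fun α => by simp [hg, twistedConv, twistPhase, Matrix.bilinCLM_apply]⟩
end

section
/- For Schwartz functions ψ, φ on R^n, the squared modulus of their L² inner product satisfies |⟨ψ, φ⟩|² = (2π)^n ∫ W_ψ(α) W_φ(α) dα, where W_ψ and W_φ are the Wigner functions of ψ and φ. -/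
open MeasureTheory Real Complex

/-!
For fixed `x`, the Wigner function is a Fourier transform in `y` of the kernel
`K_ψ(x, y) = ψ(x - y/2) conj ψ(x + y/2)`. Parseval in the momentum variable turns
`∫ W_ψ W_φ dp` into `∫ K_ψ(x, y) K_φ(x, -y) dy`, and the change of variables
`(x, y) ↦ (x - y/2, x + y/2)`, which preserves Lebesgue measure, splits the remaining double
integral into `⟨φ, ψ⟩ ⟨ψ, φ⟩ = |⟨ψ, φ⟩|²`. Fubini applies because Wigner functions of Schwartz
functions are square integrable on phase space, by Plancherel in `p` and the same change of
variables.
-/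

open FourierTransform SchwartzMap ComplexConjugate RealInnerProductSpace

noncomputable section

section ChangeOfVariables

variable {E : Type*} [NormedAddCommGroup E] [NormedSpace ℝ E] [MeasurableSpace E] [BorelSpace E]
  [SecondCountableTopology E] (μ : Measure E) [SFinite μ] [μ.IsAddRightInvariant]
  [μ.IsAddLeftInvariant]

theorem measurePreserving_sub_smul_add_smul (c : ℝ) :
    MeasurePreserving (fun z : E × E => (z.1 - c • z.2, z.1 + (1 - c) • z.2))
      (μ.prod μ) (μ.prod μ) := by
  have shear : MeasurePreserving (fun z : E × E => (z.1, z.2 - c • z.1)) (μ.prod μ) (μ.prod μ) :=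
    (MeasurePreserving.id μ).skew_product (g := fun y x => x - c • y) (by fun_prop)
      (ae_of_all _ fun y => (measurePreserving_sub_right μ (c • y)).map_eq)
  -- the shear `(x, y) ↦ (x - c • y, y)` followed by the shear `(u, y) ↦ (u, u + y)`
  convert (measurePreserving_prod_add μ μ).comp
    (Measure.measurePreserving_swap.comp (shear.comp Measure.measurePreserving_swap)) using 2 with z
  exact Prod.ext rfl (by simp only [Function.comp_apply, Prod.fst_swap, Prod.snd_swap]; module)

theorem integrable_comp_sub_smul_add_smul {𝕜 : Type*} [NormedRing 𝕜] (c : ℝ) {f g : E → 𝕜}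
    (hf : Integrable f μ) (hg : Integrable g μ) :
    Integrable (fun z : E × E => f (z.1 - c • z.2) * g (z.1 + (1 - c) • z.2)) (μ.prod μ) :=
  ((measurePreserving_sub_smul_add_smul μ c).integrable_comp
    (hf.mul_prod hg).aestronglyMeasurable).mpr (hf.mul_prod hg)

theorem integral_comp_sub_smul_add_smul {𝕜 : Type*} [RCLike 𝕜] (c : ℝ) {f g : E → 𝕜}
    (hf : Integrable f μ) (hg : Integrable g μ) :
    ∫ z : E × E, f (z.1 - c • z.2) * g (z.1 + (1 - c) • z.2) ∂(μ.prod μ)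
      = (∫ x, f x ∂μ) * ∫ x, g x ∂μ := by
  have hT := measurePreserving_sub_smul_add_smul μ c
  have hfg : AEStronglyMeasurable (fun w : E × E => f w.1 * g w.2)
      (Measure.map (fun z : E × E => (z.1 - c • z.2, z.1 + (1 - c) • z.2)) (μ.prod μ)) := by
    rw [hT.map_eq]; exact (hf.mul_prod hg).aestronglyMeasurable
  rw [← integral_map hT.aemeasurable hfg, hT.map_eq, integral_prod_mul]

end ChangeOfVariables

theorem integral_prod_comp_smul_right {W : Type*} [MeasurableSpace W] (ν : Measure W) [SFinite ν]
    {V : Type*} [NormedAddCommGroup V] [NormedSpace ℝ V] [FiniteDimensional ℝ V]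
    [MeasurableSpace V] [BorelSpace V] (μ : Measure V) [μ.IsAddHaarMeasure]
    {G : Type*} [NormedAddCommGroup G] [NormedSpace ℝ G] (F : W × V → G) {c : ℝ} (hc : c ≠ 0) :
    ∫ z, F (z.1, c • z.2) ∂(ν.prod μ) = |(c ^ Module.finrank ℝ V)⁻¹| • ∫ z, F z ∂(ν.prod μ) := by
  let e : W × V ≃ᵐ W × V := (MeasurableEquiv.refl W).prodCongr
    (Homeomorph.smulOfNeZero c hc).toMeasurableEquiv
  have hmap : (ν.prod μ).map e = ENNReal.ofReal |(c ^ Module.finrank ℝ V)⁻¹| • ν.prod μ := by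
    rw [← Measure.prod_smul_right, ← Measure.map_addHaar_smul μ hc, ← Measure.map_id (μ := ν),
      Measure.map_prod_map ν μ measurable_id (measurable_const_smul c), Measure.map_id]
    rfl
  change ∫ z, F (e z) ∂(ν.prod μ) = _
  rw [← integral_map_equiv e, hmap, integral_smul_measure, ENNReal.toReal_ofReal (abs_nonneg _)]

section SchwartzKernel

variable {E : Type*} [NormedAddCommGroup E] [NormedSpace ℝ E]
  {F : Type*} [NormedAddCommGroup F] [NormedSpace ℝ F]

def SchwartzMap.compAffine (f : 𝓢(E, F)) (x : E) {c : ℝ} (hc : c ≠ 0) : 𝓢(E, F) :=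
  compCLMOfContinuousLinearEquiv ℝ (ContinuousLinearEquiv.smulLeft (Units.mk0 c hc))
    (compSubConstCLM ℝ (-x) f)

@[simp]
theorem SchwartzMap.compAffine_apply (f : 𝓢(E, F)) (x : E) {c : ℝ} (hc : c ≠ 0) (y : E) :
    f.compAffine x hc y = f (x + c • y) := by
  simp [compAffine, add_comm]

def wignerKernel (f g : 𝓢(E, ℂ)) (x : E) : 𝓢(E, ℂ) :=
  bilinLeftCLM (ContinuousLinearMap.mul ℂ ℂ)
    (postcompCLM (Complex.conjCLE : ℂ →L[ℝ] ℂ)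
      (g.compAffine x (c := 2⁻¹) (by norm_num))).hasTemperateGrowth
    (f.compAffine x (c := -2⁻¹) (by norm_num))

theorem wignerKernel_apply (f g : 𝓢(E, ℂ)) (x y : E) :
    wignerKernel f g x y = f (x - (2:ℝ)⁻¹ • y) * conj (g (x + (2:ℝ)⁻¹ • y)) := by
  simp [wignerKernel, neg_smul, sub_eq_add_neg]

end SchwartzKernel

section Wigner

variable {V : Type*} [NormedAddCommGroup V] [InnerProductSpace ℝ V] [FiniteDimensional ℝ V]
  [MeasurableSpace V] [BorelSpace V]

theorem SchwartzMap.fourier_fourier_apply (v : 𝓢(V, ℂ)) (y : V) : 𝓕 (𝓕 v) y = v (-y) := by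
  calc 𝓕 (𝓕 v) y = 𝓕⁻ (𝓕 v) (-y) := by
        rw [fourierInv_apply_eq, compCLMOfContinuousLinearEquiv_apply]; simp
    _ = v (-y) := by rw [fourierInv_fourier_eq]

theorem SchwartzMap.integral_fourier_mul_fourier (u v : 𝓢(V, ℂ)) :
    ∫ ξ, 𝓕 u ξ * 𝓕 v ξ = ∫ y, u y * v (-y) := by
  simp only [integral_fourier_mul_eq u (𝓕 v), fourier_fourier_apply]

/-- Normalised with Mathlib's Fourier transform `∫ e^{-2πi⟪y, ξ⟫} K(y) dy`; the physicists' `W(x, p)`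
is `(2π)⁻ⁿ` times its value at `(x, -p / 2π)`, see `wig2_eq_wignerTransform`. -/
def wignerTransform (f g : 𝓢(V, ℂ)) (z : V × V) : ℂ := 𝓕 (wignerKernel f g z.1) z.2

theorem SchwartzMap.integrable_conj_mul (f g : 𝓢(V, ℂ)) :
    Integrable (fun x => conj (f x) * g x) :=
  g.integrable.bdd_mul (c := SchwartzMap.seminorm ℝ 0 0 f)
    (Complex.continuous_conj.comp f.continuous).aestronglyMeasurable
    (ae_of_all _ fun x => by simpa using f.norm_le_seminorm ℝ x)

theorem aestronglyMeasurable_wignerTransform (f g : 𝓢(V, ℂ)) :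
    AEStronglyMeasurable (wignerTransform f g) := by
  have hF : Continuous fun p : (V × V) × V =>
      Complex.exp (↑(-2 * π * ⟪p.2, p.1.2⟫) * Complex.I) • wignerKernel f g p.1.1 p.2 := by
    simp only [wignerKernel_apply]
    fun_prop
  refine (hF.aestronglyMeasurable.integral_prod_right' (μ := volume) (ν := volume)).congr
    (ae_of_all _ fun z => ?_)
  exact (Real.fourier_eq' (wignerKernel f g z.1 : V → ℂ) z.2).symm

theorem memLp_wignerTransform (f g : 𝓢(V, ℂ)) : MemLp (wignerTransform f g) 2 := by
  have hmeas := aestronglyMeasurable_wignerTransform f g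
  have hsq (h : 𝓢(V, ℂ)) : Integrable (fun x => ‖h x‖ ^ 2) :=
    (h.memLp 2).integrable_norm_pow two_ne_zero
  rw [memLp_two_iff_integrable_sq_norm hmeas]
  refine (integrable_prod_iff (f := fun z => ‖wignerTransform f g z‖ ^ 2) (hmeas.norm.pow 2)).mpr
    ⟨ae_of_all _ fun x => hsq (𝓕 (wignerKernel f g x)), ?_⟩
  simp only [norm_pow, norm_norm, wignerTransform, integral_norm_sq_fourier]
  have hK : Integrable (fun z : V × V => ‖wignerKernel f g z.1 z.2‖ ^ 2) (volume.prod volume) := by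
    simpa only [wignerKernel_apply, norm_mul, Complex.norm_conj, mul_pow,
      show (1:ℝ) - 2⁻¹ = 2⁻¹ by norm_num]
      using integrable_comp_sub_smul_add_smul volume 2⁻¹ (hsq f) (hsq g)
  exact hK.integral_prod_left

theorem integral_wignerTransform_mul (f g f' g' : 𝓢(V, ℂ)) :
    ∫ z, wignerTransform f g z * wignerTransform f' g' z
      = (∫ x, conj (g' x) * f x) * ∫ x, conj (g x) * f' x := by
  have hW : Integrable (fun z => wignerTransform f g z * wignerTransform f' g' z) :=
    (memLp_wignerTransform f g).integrable_mul (memLp_wignerTransform f' g')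
  have hK := integrable_comp_sub_smul_add_smul volume 2⁻¹ (g'.integrable_conj_mul f)
    (g.integrable_conj_mul f')
  rw [← integral_comp_sub_smul_add_smul volume 2⁻¹ (g'.integrable_conj_mul f)
    (g.integrable_conj_mul f'), Measure.volume_eq_prod, integral_prod _ hW, integral_prod _ hK]
  simp only [wignerTransform, integral_fourier_mul_fourier]
  congr 1; funext x; congr 1; funext y
  rw [wignerKernel_apply, wignerKernel_apply, smul_neg, sub_neg_eq_add, ← sub_eq_add_neg,
    show (1:ℝ) - 2⁻¹ = 2⁻¹ by norm_num]
  ring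

end Wigner

section Coordinates

variable {n : ℕ}

def SchwartzMap.toEuclidean (f : 𝓢(Vn n, ℂ)) : 𝓢(EuclideanSpace ℝ (Fin n), ℂ) :=
  compCLMOfContinuousLinearEquiv ℝ (PiLp.continuousLinearEquiv 2 ℝ fun _ : Fin n => ℝ) f

theorem integral_vn_eq_integral_euclidean {G : Type*} [NormedAddCommGroup G] [NormedSpace ℝ G]
    (h : Vn n → G) :
    ∫ x, h x = ∫ y : EuclideanSpace ℝ (Fin n), h y.ofLp :=
  ((EuclideanSpace.volume_preserving_symm_measurableEquiv_toLp (Fin n)).integral_comp' h).symm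

theorem integral_ps_eq_integral_euclidean {G : Type*} [NormedAddCommGroup G] [NormedSpace ℝ G]
    (h : PS n → G) :
    ∫ α, h α = ∫ z : EuclideanSpace ℝ (Fin n) × EuclideanSpace ℝ (Fin n),
      h (z.1.ofLp, z.2.ofLp) := by
  have hT := EuclideanSpace.volume_preserving_symm_measurableEquiv_toLp (Fin n)
  exact ((hT.prod hT).integral_comp' (f := MeasurableEquiv.prodCongr _ _) h).symm

theorem wig2_eq_wignerTransform (f g : 𝓢(Vn n, ℂ)) (α : PS n) :
    wig2 (fun x => f x) (fun x => g x) α = (((2 * π) ^ n)⁻¹ : ℝ) *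
      wignerTransform f.toEuclidean g.toEuclidean
        (WithLp.toLp 2 α.1, (-(2 * π)⁻¹) • WithLp.toLp 2 α.2) := by
  rw [wig2, wignerTransform, fourier_coe, Real.fourier_eq', integral_vn_eq_integral_euclidean]
  congr 1
  refine integral_congr_ae (ae_of_all _ fun y => ?_)
  have hphase : ((-2 * π * ⟪y, -(2 * π)⁻¹ • WithLp.toLp 2 α.2⟫ : ℝ) : ℂ) * I
      = I * ((∑ j, α.2 j * y j : ℝ) : ℂ) := by
    rw [real_inner_smul_right, EuclideanSpace.inner_eq_star_dotProduct, mul_comm _ I]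
    field_simp
    simp [dotProduct, mul_comm]
  simp only [hphase, wignerKernel_apply, SchwartzMap.toEuclidean,
    compCLMOfContinuousLinearEquiv_apply, Function.comp_apply, smul_eq_mul,
    PiLp.coe_continuousLinearEquiv, WithLp.ofLp_sub, WithLp.ofLp_add, WithLp.ofLp_smul]
  ring

end Coordinates

end

open MeasureTheory Real Complex in
/-- |⟨ψ, φ⟩|² = (2π)ⁿ ∫ W_ψ(α) W_φ(α) dα for Schwartz ψ, φ. -/
theorem inner_sq_eq_wigner_overlap (n : ℕ) (ψ φ : SchwartzMap (Vn n) ℂ) :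
    ((‖ip (fun x => ψ x) (fun x => φ x)‖ ^ 2 : ℝ) : ℂ)
      = ((2 * Real.pi) ^ n : ℝ) * ∫ α : PS n, wig (fun x => ψ x) α * wig (fun x => φ x) α := by
  have hip (f g : 𝓢(Vn n, ℂ)) :
      ip (fun x => f x) (fun x => g x) = ∫ x, conj (f.toEuclidean x) * g.toEuclidean x :=
    integral_vn_eq_integral_euclidean _
  have hconj : conj (ip (fun x => ψ x) (fun x => φ x)) = ip (fun x => φ x) (fun x => ψ x) := by
    simp only [ip, ← integral_conj, map_mul, Complex.conj_conj, mul_comm]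
  have hscale : |((-(2 * π)⁻¹) ^ Module.finrank ℝ (EuclideanSpace ℝ (Fin n)))⁻¹| = (2 * π) ^ n := by
    rw [finrank_euclideanSpace_fin, abs_inv, abs_pow, abs_neg, abs_inv, abs_of_pos two_pi_pos,
      inv_pow, inv_inv]
  rw [integral_ps_eq_integral_euclidean]
  simp only [wig, wig2_eq_wignerTransform, WithLp.toLp_ofLp,
    mul_mul_mul_comm _ (wignerTransform _ _ _), integral_const_mul]
  rw [Measure.volume_eq_prod, integral_prod_comp_smul_right _ _
    (fun z => wignerTransform ψ.toEuclidean ψ.toEuclidean z *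
      wignerTransform φ.toEuclidean φ.toEuclidean z) (by simp [pi_ne_zero]), hscale,
    ← Measure.volume_eq_prod, integral_wignerTransform_mul, ← hip, ← hip, ← hconj,
    ← Complex.normSq_eq_conj_mul_self, Complex.normSq_eq_norm_sq, Complex.real_smul]
  have h2π : ((2 * π) ^ n : ℂ) ≠ 0 := by simp [pi_ne_zero]
  push_cast
  field_simp
end
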